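/- Let A satisfy the structural assumptions (A = -e₁e₁ᵗ - V⁻¹M, V positive diagonal, M symmetric irreducible with positive diagonal, nonpositive off-diagonal, zero row sums) and suppose (A, e₁) is controllable. Let P diagonalize Ã: P⁻¹ÃP = Δ diagonal, with all entries of P⁻¹𝟙̃ nonzero and the eigenvalues of Ã distinct. Define R̃ = -PΔ⁻¹diag(P⁻¹A(2:n,1)) and R = diag(1, R̃) (block diagonal). Then R is invertible and R⁻¹AR is an MRMT matrix, i.e., R⁻¹AR satisfies the same structural assumptions and its lower-right (n−1)×(n−1) block is diagonal. -/

import Mathlib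

open Matrix

/-- Block-diagonal matrix diag(1, R̃). -/
def blockDiag1 {n : ℕ} (Rt : Matrix (Fin n) (Fin n) ℝ) :
    Matrix (Fin (n + 1)) (Fin (n + 1)) ℝ :=
  Matrix.of fun i j =>
    if hi : i = 0 then (if j = 0 then 1 else 0)
    else if hj : j = 0 then 0
    else Rt (i.pred hi) (j.pred hj)

/-!
Write `Ã = -Ṽ⁻¹ M̃` for the lower blocks. Grounding vertex `0` of the connected weighted graph
of `M` makes `M̃` positive definite, so `Ã` is invertible and self-adjoint for the inner product
given by `Ṽ`: eigenvectors of `Ã` for distinct eigenvalues are `Ṽ`-orthogonal. Since the rows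
of `A` below the first one sum to zero, `A(2:n,1) = -Ã 𝟙̃`, and `R̃` collapses to
`S = P diag(P⁻¹ 𝟙̃)`, whose columns are still eigenvectors and which satisfies `S 𝟙̃ = 𝟙̃`.

Hence `R = diag(1, S)` fixes `e₁` and `𝟙`, and `V' = Rᵀ V R` is diagonal and positive definite,
so `R⁻¹ A R = -e₁e₁ᵀ - V'⁻¹ M'` with `M' = Rᵀ M R`. This congruence keeps `M'` symmetric with zero
row sums, and its lower block `Sᵀ M̃ S = -(Sᵀ Ṽ S) Δ` is diagonal and positive definite. The graph
of `M'` is therefore a star centred at the first vertex, which is connected.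
-/

section BlockDiag1

variable {n : ℕ} (S : Matrix (Fin n) (Fin n) ℝ)

@[simp] lemma blockDiag1_zero_zero : blockDiag1 S 0 0 = 1 := by simp [blockDiag1]

@[simp] lemma blockDiag1_zero_succ (j : Fin n) : blockDiag1 S 0 j.succ = 0 := by
  simp [blockDiag1]

@[simp] lemma blockDiag1_succ_zero (i : Fin n) : blockDiag1 S i.succ 0 = 0 := by
  simp [blockDiag1]

@[simp] lemma blockDiag1_succ_succ (i j : Fin n) : blockDiag1 S i.succ j.succ = S i j := by
  simp [blockDiag1]

lemma transpose_blockDiag1 : (blockDiag1 S)ᵀ = blockDiag1 Sᵀ := by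
  ext i j
  cases i using Fin.cases <;> cases j using Fin.cases <;> simp

lemma det_blockDiag1 : (blockDiag1 S).det = S.det := by
  have hS : (blockDiag1 S).submatrix Fin.succ Fin.succ = S := by ext; simp
  simp [det_succ_row_zero, Fin.sum_univ_succ, hS]

lemma blockDiag1_mulVec_single_zero : blockDiag1 S *ᵥ Pi.single 0 1 = Pi.single 0 1 := by
  ext i
  cases i using Fin.cases <;> simp [mulVec, dotProduct, Pi.single_apply]

lemma single_zero_vecMul_blockDiag1 : Pi.single 0 1 ᵥ* blockDiag1 S = Pi.single 0 1 := by
  ext i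
  cases i using Fin.cases <;> simp [vecMul, dotProduct, Pi.single_apply]

lemma blockDiag1_mulVec_one (h : S *ᵥ 1 = 1) : blockDiag1 S *ᵥ 1 = 1 := by
  ext i
  cases i using Fin.cases
  · simp [mulVec, dotProduct, Fin.sum_univ_succ]
  · simpa [mulVec, dotProduct, Fin.sum_univ_succ] using congr_fun h _

variable (X : Matrix (Fin (n + 1)) (Fin (n + 1)) ℝ)

lemma transpose_blockDiag1_mul_mul_zero_zero :
    ((blockDiag1 S)ᵀ * X * blockDiag1 S) 0 0 = X 0 0 := by
  simp [transpose_blockDiag1, mul_apply, Fin.sum_univ_succ]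

lemma transpose_blockDiag1_mul_mul_submatrix_succ :
    ((blockDiag1 S)ᵀ * X * blockDiag1 S).submatrix Fin.succ Fin.succ =
      Sᵀ * X.submatrix Fin.succ Fin.succ * S := by
  ext i j
  simp [transpose_blockDiag1, mul_apply, Fin.sum_univ_succ]

lemma isDiag_transpose_blockDiag1_mul_diagonal_mul {v : Fin (n + 1) → ℝ}
    (h : (Sᵀ * diagonal (fun i : Fin n => v i.succ) * S).IsDiag) :
    ((blockDiag1 S)ᵀ * diagonal v * blockDiag1 S).IsDiag := by
  intro i j hij
  cases i using Fin.cases <;> cases j using Fin.cases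
  · exact absurd rfl hij
  all_goals simp [transpose_blockDiag1, mul_apply, Fin.sum_univ_succ, diagonal_apply]
  simpa [mul_apply, diagonal_apply] using h (Fin.succ_inj.not.1 hij)

end BlockDiag1

section Laplacian

variable {ι K : Type*} {M : Matrix ι ι K}

lemma two_mul_dotProduct_mulVec_eq_sum [Fintype ι] [CommRing K] (hsym : M.IsSymm)
    (hrow : ∀ i, ∑ j, M i j = 0) (z : ι → K) :
    2 * (z ⬝ᵥ M *ᵥ z) = ∑ i, ∑ j, -M i j * (z i - z j) ^ 2 := by
  have hcol : ∀ j, ∑ i, M i j = 0 := fun j => by simpa [hsym.apply] using hrow j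
  have hi : ∑ i, ∑ j, M i j * z i ^ 2 = 0 := by simp [← Finset.sum_mul, hrow]
  have hj : ∑ i, ∑ j, M i j * z j ^ 2 = 0 := by
    rw [Finset.sum_comm]; simp [← Finset.sum_mul, hcol]
  have hexp : ∀ i j, -M i j * (z i - z j) ^ 2 =
      2 * (z i * (M i j * z j)) - M i j * z i ^ 2 - M i j * z j ^ 2 := fun i j => by ring
  simp only [hexp, Finset.sum_sub_distrib, ← Finset.mul_sum, hi, hj, dotProduct, mulVec]
  ring

variable [CommRing K] [LinearOrder K] [IsStrictOrderedRing K]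

lemma neg_apply_mul_sq_sub_nonneg (hoff : ∀ i j, i ≠ j → M i j ≤ 0) (z : ι → K) (i j : ι) :
    0 ≤ -M i j * (z i - z j) ^ 2 := by
  rcases eq_or_ne i j with rfl | hij
  · simp
  · exact mul_nonneg (neg_nonneg.2 (hoff i j hij)) (sq_nonneg _)

variable [Fintype ι]

lemma dotProduct_mulVec_self_nonneg (hsym : M.IsSymm) (hoff : ∀ i j, i ≠ j → M i j ≤ 0)
    (hrow : ∀ i, ∑ j, M i j = 0) (z : ι → K) : 0 ≤ z ⬝ᵥ M *ᵥ z := by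
  have h := two_mul_dotProduct_mulVec_eq_sum hsym hrow z
  have : 0 ≤ ∑ i, ∑ j, -M i j * (z i - z j) ^ 2 :=
    Finset.sum_nonneg fun i _ => Finset.sum_nonneg fun j _ => neg_apply_mul_sq_sub_nonneg hoff z i j
  linarith

lemma eq_of_dotProduct_mulVec_self_eq_zero (hsym : M.IsSymm)
    (hoff : ∀ i j, i ≠ j → M i j ≤ 0) (hrow : ∀ i, ∑ j, M i j = 0) {z : ι → K}
    (hz : z ⬝ᵥ M *ᵥ z = 0) {i j : ι} (hij : Relation.TransGen (fun a b => M a b ≠ 0) i j) :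
    z i = z j := by
  have hsum := two_mul_dotProduct_mulVec_eq_sum hsym hrow z
  rw [hz, mul_zero, eq_comm, Finset.sum_eq_zero_iff_of_nonneg fun a _ =>
    Finset.sum_nonneg fun b _ => neg_apply_mul_sq_sub_nonneg hoff z a b] at hsum
  have hedge : ∀ a b, M a b ≠ 0 → z a = z b := fun a b hab => by
    have h := (Finset.sum_eq_zero_iff_of_nonneg fun b _ => neg_apply_mul_sq_sub_nonneg hoff z a b).1
      (hsum a (Finset.mem_univ a)) b (Finset.mem_univ b)
    rw [mul_eq_zero, neg_eq_zero, pow_eq_zero_iff two_ne_zero, sub_eq_zero] at h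
    exact h.resolve_left hab
  induction hij with
  | single hab => exact hedge _ _ hab
  | tail _ hbc ih => exact ih.trans (hedge _ _ hbc)

end Laplacian

lemma posDef_submatrix_succ_of_laplacian {n : ℕ} {M : Matrix (Fin (n + 1)) (Fin (n + 1)) ℝ}
    (hsym : M.IsSymm) (hoff : ∀ i j, i ≠ j → M i j ≤ 0) (hrow : ∀ i, ∑ j, M i j = 0)
    (hirr : ∀ i j, i ≠ j → Relation.TransGen (fun a b => M a b ≠ 0) i j) :
    (M.submatrix Fin.succ Fin.succ).PosDef := by
  refine .of_dotProduct_mulVec_pos (by simpa using hsym.submatrix Fin.succ) fun y hy => ?_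
  set z : Fin (n + 1) → ℝ := Fin.cons 0 y
  have hzy : star y ⬝ᵥ (M.submatrix Fin.succ Fin.succ *ᵥ y) = z ⬝ᵥ M *ᵥ z := by
    simp [z, dotProduct, mulVec, Fin.sum_univ_succ]
  rw [hzy]
  refine (dotProduct_mulVec_self_nonneg hsym hoff hrow z).lt_of_ne fun h0 => hy ?_
  funext i
  simpa [z] using eq_of_dotProduct_mulVec_self_eq_zero hsym hoff hrow h0.symm
    (hirr i.succ 0 (Fin.succ_ne_zero i))

section StarGraph

variable {n : ℕ} {M : Matrix (Fin (n + 1)) (Fin (n + 1)) ℝ}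

lemma apply_succ_zero_eq_neg_of_isDiag (hrow : ∀ i, ∑ j, M i j = 0)
    (hdiag : (M.submatrix Fin.succ Fin.succ).IsDiag) (i : Fin n) :
    M i.succ 0 = -M i.succ i.succ := by
  have h := hrow i.succ
  rw [Fin.sum_univ_succ, Finset.sum_eq_single (f := fun j => M i.succ j.succ) i
    (fun j _ hji => by exact hdiag hji.symm) (by simp)] at h
  linarith

lemma apply_nonpos_of_isDiag (hsym : M.IsSymm) (hrow : ∀ i, ∑ j, M i j = 0)
    (hdiag : (M.submatrix Fin.succ Fin.succ).IsDiag) (hpos : ∀ i : Fin n, 0 < M i.succ i.succ)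
    {i j : Fin (n + 1)} (hij : i ≠ j) : M i j ≤ 0 := by
  have hleaf (k : Fin n) : M k.succ 0 ≤ 0 := by
    rw [apply_succ_zero_eq_neg_of_isDiag hrow hdiag]; linarith [hpos k]
  cases i using Fin.cases <;> cases j using Fin.cases
  · exact absurd rfl hij
  · rw [← hsym.apply]; exact hleaf _
  · exact hleaf _
  · exact (hdiag (Fin.succ_inj.not.1 hij)).le

/-- The graph of `M` is a star centred at `0`. -/
lemma transGen_of_isDiag (hsym : M.IsSymm) (hrow : ∀ i, ∑ j, M i j = 0)
    (hdiag : (M.submatrix Fin.succ Fin.succ).IsDiag) (hpos : ∀ i : Fin n, 0 < M i.succ i.succ)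
    {i j : Fin (n + 1)} (hij : i ≠ j) : Relation.TransGen (fun a b => M a b ≠ 0) i j := by
  have hleaf (k : Fin n) : M k.succ 0 ≠ 0 := by
    rw [apply_succ_zero_eq_neg_of_isDiag hrow hdiag]; linarith [hpos k]
  have hleaf' (k : Fin n) : M 0 k.succ ≠ 0 := hsym.apply k.succ 0 ▸ hleaf k
  cases i using Fin.cases <;> cases j using Fin.cases
  · exact absurd rfl hij
  · exact .single (hleaf' _)
  · exact .single (hleaf _)
  · exact .head (hleaf _) (.single (hleaf' _))

end StarGraph

section Diagonalization

variable {ι K : Type*} [Fintype ι] [DecidableEq ι]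

lemma inv_diagonal_of_ne_zero [Field K] {v : ι → K} (hv : ∀ i, v i ≠ 0) :
    (diagonal v)⁻¹ = diagonal v⁻¹ :=
  inv_eq_left_inv <| by simp [diagonal_mul_diagonal, hv]

/-- Eigenvectors of a `W`-self-adjoint `T` for distinct eigenvalues are `W`-orthogonal. -/
lemma isDiag_transpose_mul_mul_of_mul_eq_mul_diagonal [CommRing K] [IsDomain K]
    {W T S : Matrix ι ι K} {d : ι → K} (hW : W.IsSymm) (hWT : (W * T).IsSymm)
    (hd : Function.Injective d) (hTS : T * S = S * diagonal d) : (Sᵀ * W * S).IsDiag := by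
  have hright : Sᵀ * W * S * diagonal d = Sᵀ * (W * T) * S := by
    simp only [Matrix.mul_assoc, hTS]
  have hleft : diagonal d * (Sᵀ * W * S) = Sᵀ * (W * T) * S := calc
    _ = (S * diagonal d)ᵀ * W * S := by
      rw [transpose_mul, diagonal_transpose]; simp only [Matrix.mul_assoc]
    _ = Sᵀ * (W * T)ᵀ * S := by
      rw [← hTS, transpose_mul, transpose_mul, hW.eq]; simp only [Matrix.mul_assoc]
    _ = Sᵀ * (W * T) * S := by rw [hWT.eq]
  intro i j hij
  have h := congr_fun (congr_fun (hright.trans hleft.symm) i) j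
  rw [mul_diagonal, diagonal_mul, mul_comm, ← sub_eq_zero, ← sub_mul] at h
  exact (mul_eq_zero.1 h).resolve_left (sub_ne_zero.2 (hd.ne hij).symm)

variable [Field K] {P T : Matrix ι ι K} {d : ι → K}

lemma mul_mul_diagonal_eq_of_inv_mul_mul_eq (hP : IsUnit P.det)
    (hdiag : P⁻¹ * T * P = diagonal d) (x : ι → K) :
    T * (P * diagonal x) = P * diagonal x * diagonal d := by
  have hTP : T * P = P * diagonal d := by
    rw [← hdiag, ← Matrix.mul_assoc, ← Matrix.mul_assoc, mul_nonsing_inv _ hP, Matrix.one_mul]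
  rw [← Matrix.mul_assoc, hTP, Matrix.mul_assoc, Matrix.mul_assoc, (commute_diagonal _ _).eq]

lemma isUnit_det_mul_diagonal (hP : IsUnit P.det) {x : ι → K} (hx : ∀ i, x i ≠ 0) :
    IsUnit (P * diagonal x).det := by
  rw [det_mul, det_diagonal]
  exact hP.mul (Finset.prod_ne_zero_iff.2 fun i _ => hx i).isUnit

lemma ne_zero_of_inv_mul_mul_eq_diagonal (hP : IsUnit P.det) (hT : IsUnit T)
    (hdiag : P⁻¹ * T * P = diagonal d) (i : ι) : d i ≠ 0 := by
  have hPu : IsUnit P := (isUnit_iff_isUnit_det P).2 hP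
  have hd : IsUnit (diagonal d) := hdiag ▸ ((isUnit_nonsing_inv_iff.2 hPu).mul hT).mul hPu
  exact (Pi.isUnit_iff.1 (isUnit_diagonal.1 hd) i).ne_zero

lemma mul_diagonal_inv_mulVec_one_mulVec_one (hP : IsUnit P.det) :
    (P * diagonal (P⁻¹ *ᵥ 1)) *ᵥ 1 = 1 := by
  have hx : diagonal (P⁻¹ *ᵥ 1) *ᵥ 1 = P⁻¹ *ᵥ 1 := by ext i; simp [mulVec_diagonal]
  rw [← mulVec_mulVec, hx, mulVec_mulVec, mul_nonsing_inv _ hP, one_mulVec]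

lemma neg_mul_inv_diagonal_mul_diagonal_eq (hP : IsUnit P.det)
    (hdiag : P⁻¹ * T * P = diagonal d) (hd : ∀ i, d i ≠ 0) :
    -(P * (diagonal d)⁻¹ * diagonal (P⁻¹ *ᵥ -(T *ᵥ 1))) = P * diagonal (P⁻¹ *ᵥ 1) := by
  have hPx : P *ᵥ (P⁻¹ *ᵥ 1) = 1 := by rw [mulVec_mulVec, mul_nonsing_inv _ hP, one_mulVec]
  have hc : P⁻¹ *ᵥ (T *ᵥ 1) = d * (P⁻¹ *ᵥ 1) := by
    conv_lhs => rw [← hPx]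
    rw [mulVec_mulVec, mulVec_mulVec, hdiag]
    ext i
    exact mulVec_diagonal _ _ i
  have hdet : IsUnit (diagonal d).det := by
    rw [det_diagonal]; exact (Finset.prod_ne_zero_iff.2 fun i _ => hd i).isUnit
  have hneg : diagonal (-(d * (P⁻¹ *ᵥ 1))) = -(diagonal d * diagonal (P⁻¹ *ᵥ 1)) := by
    simp [diagonal_mul_diagonal]
  rw [mulVec_neg, hc, hneg, Matrix.mul_neg, neg_neg, Matrix.mul_assoc,
    ← Matrix.mul_assoc _ (diagonal d), nonsing_inv_mul _ hdet, Matrix.one_mul]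

lemma inv_mul_mul_eq_of_transpose_mul_diagonal_mul_eq {B v v' : ι → K} {M R : Matrix ι ι K}
    (hv : ∀ i, v i ≠ 0) (hv' : ∀ i, v' i ≠ 0) (hRB : R *ᵥ B = B) (hBR : B ᵥ* R = B)
    (hgram : Rᵀ * diagonal v * R = diagonal v') :
    R⁻¹ * (-vecMulVec B B - (diagonal v)⁻¹ * M) * R =
      -vecMulVec B B - (diagonal v')⁻¹ * (Rᵀ * M * R) := by
  have hunit : ∀ {w : ι → K}, (∀ i, w i ≠ 0) → IsUnit (diagonal w).det := fun hw => by
    rw [det_diagonal]; exact (Finset.prod_ne_zero_iff.2 fun i _ => hw i).isUnit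
  have hleft : ((diagonal v')⁻¹ * Rᵀ * diagonal v) * R = 1 := by
    rw [Matrix.mul_assoc, Matrix.mul_assoc, ← Matrix.mul_assoc Rᵀ, hgram,
      nonsing_inv_mul _ (hunit hv')]
  have hinv : R⁻¹ = (diagonal v')⁻¹ * Rᵀ * diagonal v := inv_eq_left_inv hleft
  have hB : R⁻¹ *ᵥ B = B := by
    rw [← hRB, mulVec_mulVec, hinv, hleft, one_mulVec, hRB]
  rw [Matrix.mul_sub, Matrix.sub_mul, Matrix.mul_neg, Matrix.neg_mul, mul_vecMulVec,
    vecMulVec_mul, hB, hBR, hinv]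
  simp only [Matrix.mul_assoc, mul_nonsing_inv_cancel_left _ _ (hunit hv)]

end Diagonalization

section Compartmental

variable {n : ℕ} {v : Fin (n + 1) → ℝ} {M A : Matrix (Fin (n + 1)) (Fin (n + 1)) ℝ}

lemma apply_succ_eq_neg_div (hv : ∀ i, v i ≠ 0)
    (hA : A = -vecMulVec (Pi.single 0 1) (Pi.single 0 1) - (diagonal v)⁻¹ * M)
    (i : Fin n) (j : Fin (n + 1)) : A i.succ j = -(M i.succ j / v i.succ) := by
  simp [hA, inv_diagonal_of_ne_zero hv, diagonal_mul, div_eq_inv_mul, vecMulVec_apply]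

lemma diagonal_mul_submatrix_succ_eq_neg (hv : ∀ i, v i ≠ 0)
    (hA : A = -vecMulVec (Pi.single 0 1) (Pi.single 0 1) - (diagonal v)⁻¹ * M) :
    diagonal (fun i : Fin n => v i.succ) * A.submatrix Fin.succ Fin.succ =
      -M.submatrix Fin.succ Fin.succ := by
  ext i j
  simp [diagonal_mul, apply_succ_eq_neg_div hv hA, mul_div_cancel₀ _ (hv _)]

lemma apply_succ_zero_eq_neg_mulVec_one (hv : ∀ i, v i ≠ 0)
    (hA : A = -vecMulVec (Pi.single 0 1) (Pi.single 0 1) - (diagonal v)⁻¹ * M)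
    (hrow : ∀ i, ∑ j, M i j = 0) :
    (fun i : Fin n => A i.succ 0) = -(A.submatrix Fin.succ Fin.succ *ᵥ 1) := by
  ext i
  have h := hrow i.succ
  rw [Fin.sum_univ_succ] at h
  simp [mulVec, dotProduct, apply_succ_eq_neg_div hv hA, ← Finset.sum_div, ← neg_div,
    eq_neg_of_add_eq_zero_left h]

end Compartmental

lemma isDiag_transpose_mul_mul_mul_of_isDiag {ι K : Type*} [Fintype ι] [DecidableEq ι]
    [CommRing K] {W T S : Matrix ι ι K} {d : ι → K} (h : (Sᵀ * W * S).IsDiag)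
    (hTS : T * S = S * diagonal d) : (Sᵀ * (W * T) * S).IsDiag := by
  have hWT : Sᵀ * (W * T) * S = Sᵀ * W * S * diagonal d := by simp only [Matrix.mul_assoc, hTS]
  intro i j hij
  rw [hWT, mul_diagonal, h hij, zero_mul]

section Conjugation

variable {n : ℕ} {S : Matrix (Fin n) (Fin n) ℝ}

lemma exists_inv_blockDiag1_mul_mul_eq {v : Fin (n + 1) → ℝ} (hv : ∀ i, 0 < v i)
    (M : Matrix (Fin (n + 1)) (Fin (n + 1)) ℝ) (hS : IsUnit S.det)
    (horth : (Sᵀ * diagonal (fun i : Fin n => v i.succ) * S).IsDiag) :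
    ∃ v' : Fin (n + 1) → ℝ, (∀ i, 0 < v' i) ∧
      (blockDiag1 S)⁻¹ * (-vecMulVec (Pi.single 0 1) (Pi.single 0 1) - (diagonal v)⁻¹ * M) *
        blockDiag1 S = -vecMulVec (Pi.single 0 1) (Pi.single 0 1) -
          (diagonal v')⁻¹ * ((blockDiag1 S)ᵀ * M * blockDiag1 S) := by
  have hR : IsUnit (blockDiag1 S) := (isUnit_iff_isUnit_det _).2 (det_blockDiag1 S ▸ hS)
  have hG : ((blockDiag1 S)ᵀ * diagonal v * blockDiag1 S).PosDef := by
    simpa using (PosDef.diagonal hv).conjTranspose_mul_mul_same (mulVec_injective_of_isUnit hR)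
  exact ⟨_, fun i => hG.diag_pos,
    inv_mul_mul_eq_of_transpose_mul_diagonal_mul_eq (fun i => (hv i).ne')
      (fun i => hG.diag_pos.ne') (blockDiag1_mulVec_single_zero S)
      (single_zero_vecMul_blockDiag1 S)
      (isDiag_transpose_blockDiag1_mul_diagonal_mul S horth).diagonal_diag.symm⟩

lemma laplacian_transpose_blockDiag1_mul_mul {M M' : Matrix (Fin (n + 1)) (Fin (n + 1)) ℝ}
    (hM' : M' = (blockDiag1 S)ᵀ * M * blockDiag1 S) (hsym : M.IsSymm) (h0 : 0 < M 0 0)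
    (hrow : ∀ i, ∑ j, M i j = 0) (hS1 : S *ᵥ 1 = 1)
    (hdiag : (Sᵀ * M.submatrix Fin.succ Fin.succ * S).IsDiag)
    (hpos : (Sᵀ * M.submatrix Fin.succ Fin.succ * S).PosDef) :
    M'.IsSymm ∧ (∀ i j : Fin (n + 1), i ≠ j → Relation.TransGen (fun a b => M' a b ≠ 0) i j) ∧
      (∀ i, 0 < M' i i) ∧ (∀ i j, i ≠ j → M' i j ≤ 0) ∧ (∀ i, ∑ j, M' i j = 0) := by
  have hsub : M'.submatrix Fin.succ Fin.succ = Sᵀ * M.submatrix Fin.succ Fin.succ * S :=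
    hM' ▸ transpose_blockDiag1_mul_mul_submatrix_succ S M
  have hdiag' : (M'.submatrix Fin.succ Fin.succ).IsDiag := hsub ▸ hdiag
  have hpos' (i : Fin n) : 0 < M' i.succ i.succ := (hsub ▸ hpos).diag_pos (i := i)
  have hsym' : M'.IsSymm := by simp [hM', IsSymm, transpose_mul, hsym.eq, Matrix.mul_assoc]
  have hrow' : ∀ i, ∑ j, M' i j = 0 := by
    have hM1 : M *ᵥ 1 = 0 := by ext i; simpa [mulVec, dotProduct] using hrow i
    have hM'1 : M' *ᵥ 1 = 0 := by
      rw [hM', ← mulVec_mulVec, ← mulVec_mulVec, blockDiag1_mulVec_one S hS1, hM1, mulVec_zero]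
    intro i
    simpa [mulVec, dotProduct] using congr_fun hM'1 i
  refine ⟨hsym', fun i j => transGen_of_isDiag hsym' hrow' hdiag' hpos', fun i => ?_,
    fun i j => apply_nonpos_of_isDiag hsym' hrow' hdiag' hpos', hrow'⟩
  cases i using Fin.cases
  · rwa [hM', transpose_blockDiag1_mul_mul_zero_zero]
  · exact hpos' _

end Conjugation

theorem mrmt_stmt12_general {n : ℕ} (v : Fin (n + 1) → ℝ)
    (M A : Matrix (Fin (n + 1)) (Fin (n + 1)) ℝ) (B : Fin (n + 1) → ℝ)
    (hB : B = Pi.single 0 1)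
    (hv : ∀ i, 0 < v i)
    (hMsym : M.IsSymm)
    (hMirr : ∀ i j : Fin (n + 1), i ≠ j → Relation.TransGen (fun a b => M a b ≠ 0) i j)
    (hMdiag : ∀ i, 0 < M i i)
    (hMoff : ∀ i j, i ≠ j → M i j ≤ 0)
    (hMrow : ∀ i, ∑ j, M i j = 0)
    (hA : A = -(vecMulVec B B) - (Matrix.diagonal v)⁻¹ * M)
    (P : Matrix (Fin n) (Fin n) ℝ) (hP : IsUnit P.det)
    (lam : Fin n → ℝ)
    (hdiag : P⁻¹ * (A.submatrix Fin.succ Fin.succ) * P = Matrix.diagonal lam)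
    (hX : ∀ i, (P⁻¹ *ᵥ fun _ => (1 : ℝ)) i ≠ 0)
    (hlam : Function.Injective lam)
    (R : Matrix (Fin (n + 1)) (Fin (n + 1)) ℝ)
    (hR : R = blockDiag1
      (-(P * (Matrix.diagonal lam)⁻¹ * Matrix.diagonal (P⁻¹ *ᵥ fun i => A i.succ 0)))) :
    IsUnit R.det ∧
    (∃ (v' : Fin (n + 1) → ℝ) (M' : Matrix (Fin (n + 1)) (Fin (n + 1)) ℝ),
      (∀ i, 0 < v' i) ∧ M'.IsSymm ∧
      (∀ i j : Fin (n + 1), i ≠ j → Relation.TransGen (fun a b => M' a b ≠ 0) i j) ∧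
      (∀ i, 0 < M' i i) ∧ (∀ i j, i ≠ j → M' i j ≤ 0) ∧ (∀ i, ∑ j, M' i j = 0) ∧
      R⁻¹ * A * R = -(vecMulVec B B) - (Matrix.diagonal v')⁻¹ * M') ∧
    (∀ i j : Fin n, i ≠ j → (R⁻¹ * A * R) i.succ j.succ = 0) := by
  subst hB
  have hv0 : ∀ i, v i ≠ 0 := fun i => (hv i).ne'
  have hVA := diagonal_mul_submatrix_succ_eq_neg hv0 hA
  have hMt := posDef_submatrix_succ_of_laplacian hMsym hMoff hMrow hMirr
  have hlam0 := ne_zero_of_inv_mul_mul_eq_diagonal hP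
    (isUnit_of_mul_isUnit_right (hVA ▸ hMt.isUnit.neg)) hdiag
  set S := P * diagonal (P⁻¹ *ᵥ 1)
  have hRS : R = blockDiag1 S := by
    rw [hR, apply_succ_zero_eq_neg_mulVec_one hv0 hA hMrow,
      neg_mul_inv_diagonal_mul_diagonal_eq hP hdiag hlam0]
  have hS : IsUnit S.det := isUnit_det_mul_diagonal hP hX
  have hAS := mul_mul_diagonal_eq_of_inv_mul_mul_eq hP hdiag (P⁻¹ *ᵥ 1)
  have hSorth := isDiag_transpose_mul_mul_of_mul_eq_mul_diagonal (isSymm_diagonal _)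
    (hVA ▸ (hMsym.submatrix _).neg) hlam hAS
  have hSMS : (Sᵀ * M.submatrix Fin.succ Fin.succ * S).IsDiag := by
    have h := (isDiag_transpose_mul_mul_mul_of_isDiag hSorth hAS).neg
    rwa [hVA, Matrix.mul_neg, Matrix.neg_mul, neg_neg] at h
  obtain ⟨v', hv', hconj⟩ := exists_inv_blockDiag1_mul_mul_eq hv M hS hSorth
  obtain ⟨hsym', hirr', hdiag', hoff', hrow'⟩ := laplacian_transpose_blockDiag1_mul_mul rfl hMsym
    (hMdiag 0) hMrow (mul_diagonal_inv_mulVec_one_mulVec_one hP) hSMS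
    (hMt.conjTranspose_mul_mul_same (mulVec_injective_of_isUnit ((isUnit_iff_isUnit_det S).2 hS)))
  subst hRS
  rw [← hA] at hconj
  refine ⟨det_blockDiag1 S ▸ hS, ⟨v', _, hv', hsym', hirr', hdiag', hoff', hrow', hconj⟩,
    fun i j hij => ?_⟩
  have h : ((blockDiag1 S)ᵀ * M * blockDiag1 S) i.succ j.succ = 0 :=
    (transpose_blockDiag1_mul_mul_submatrix_succ S M ▸ hSMS) hij
  rw [hconj, inv_diagonal_of_ne_zero fun k => (hv' k).ne']
  simp [vecMulVec_apply, diagonal_mul, h]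

/-- for a controllable system under the structural assumptions, with
P diagonalizing Ã with distinct eigenvalues and all entries of P⁻¹𝟙̃ nonzero,
the matrix R = diag(1, -PΔ⁻¹diag(P⁻¹A(2:n,1))) is invertible and R⁻¹AR is an
MRMT matrix: it satisfies the structural assumptions and its lower-right block
is diagonal. -/
theorem mrmt_stmt12 {n : ℕ} (v : Fin (n + 1) → ℝ)
    (M A : Matrix (Fin (n + 1)) (Fin (n + 1)) ℝ) (B : Fin (n + 1) → ℝ)
    (hB : B = Pi.single 0 1)
    (hv : ∀ i, 0 < v i)
    (hMsym : M.IsSymm)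
    (hMirr : ∀ i j : Fin (n + 1), i ≠ j → Relation.TransGen (fun a b => M a b ≠ 0) i j)
    (hMdiag : ∀ i, 0 < M i i)
    (hMoff : ∀ i j, i ≠ j → M i j ≤ 0)
    (hMrow : ∀ i, ∑ j, M i j = 0)
    (hA : A = -(vecMulVec B B) - (Matrix.diagonal v)⁻¹ * M)
    (hctrb : (Matrix.of fun i (k : Fin (n + 1)) => ((A ^ (k : ℕ)) *ᵥ B) i).rank = n + 1)
    (P : Matrix (Fin n) (Fin n) ℝ) (hP : IsUnit P.det)
    (lam : Fin n → ℝ)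
    (hdiag : P⁻¹ * (A.submatrix Fin.succ Fin.succ) * P = Matrix.diagonal lam)
    (hX : ∀ i, (P⁻¹ *ᵥ fun _ => (1 : ℝ)) i ≠ 0)
    (hlam : Function.Injective lam)
    (R : Matrix (Fin (n + 1)) (Fin (n + 1)) ℝ)
    (hR : R = blockDiag1
      (-(P * (Matrix.diagonal lam)⁻¹ * Matrix.diagonal (P⁻¹ *ᵥ fun i => A i.succ 0)))) :
    IsUnit R.det ∧
    (∃ (v' : Fin (n + 1) → ℝ) (M' : Matrix (Fin (n + 1)) (Fin (n + 1)) ℝ),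
      (∀ i, 0 < v' i) ∧ M'.IsSymm ∧
      (∀ i j : Fin (n + 1), i ≠ j → Relation.TransGen (fun a b => M' a b ≠ 0) i j) ∧
      (∀ i, 0 < M' i i) ∧ (∀ i j, i ≠ j → M' i j ≤ 0) ∧ (∀ i, ∑ j, M' i j = 0) ∧
      R⁻¹ * A * R = -(vecMulVec B B) - (Matrix.diagonal v')⁻¹ * M') ∧
    (∀ i j : Fin n, i ≠ j → (R⁻¹ * A * R) i.succ j.succ = 0) :=
  mrmt_stmt12_general v M A B hB hv hMsym hMirr hMdiag hMoff hMrow hA P hP lam hdiag hX hlam R hR
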